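/- arXiv:1412.3314 — 3 statements merged into one kernel-verified Lean document; each statement's English description precedes it below -/
import Mathlib

section
/- Let P₂(x) = (2^{1/3}√3/(12π)) · (2^{1/3}(27 + 3√(81 − 12x))^{2/3} − 6 x^{1/3}) / (x^{2/3}(27 + 3√(81 − 12x))^{1/3}) for x ∈ (0, 27/4]. Then for every integer k ≥ 0, ∫₀^{27/4} x^k P₂(x) dx = (1/(2k+1)) · binom(3k, k). -/
/-!
Under the substitution `x = 27 u (1 - u)` with `u ∈ (1/2, 1)` the square root becomes
`√(81 - 12x) = 9 (2u - 1)` and `27 + 3√(81 - 12x) = 54 u`, so every cube root in `P₂` splits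
into cube roots of `2`, `u` and `1 - u`, and
`x^k P₂(x) dx = (3√3 / 2π) 27^k (2u - 1) (g(u) - g(1 - u)) du` with
`g(u) = u^(k - 1/3) (1 - u)^(k - 2/3)`. The reflection `u ↦ 1 - u` folds this into
`∫₀¹ (2u - 1) g(u) du = ∫₀¹ (u - (1 - u)) g(u) du`, a difference of two Beta integrals equal to
`Γ(k + 1/3) Γ(k + 2/3) / (3 (2k + 1)!)`. The case `n = 3` of Gauss's multiplication formula,
`√3 · 27^k k! Γ(k + 1/3) Γ(k + 2/3) = 2π (3k)!` (by induction from the reflection formula at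
`1/3`), turns this into `binom(3k, k) / (2k + 1)`.
-/

open MeasureTheory Real

/-- The Fuss–Catalan density of order 2 on `(0, 27/4]`. -/
noncomputable def fcDensity2 (x : ℝ) : ℝ :=
  (2 ^ ((1 : ℝ) / 3) * Real.sqrt 3 / (12 * Real.pi)) *
    (2 ^ ((1 : ℝ) / 3) * (27 + 3 * Real.sqrt (81 - 12 * x)) ^ ((2 : ℝ) / 3)
        - 6 * x ^ ((1 : ℝ) / 3)) /
    (x ^ ((2 : ℝ) / 3) * (27 + 3 * Real.sqrt (81 - 12 * x)) ^ ((1 : ℝ) / 3))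

open scoped Nat

lemma ofReal_rpow_mul_one_sub_rpow {x : ℝ} (hx : x ∈ Set.uIcc 0 1) (a b : ℝ) :
    ((x ^ a * (1 - x) ^ b : ℝ) : ℂ) = (x : ℂ) ^ (a : ℂ) * (1 - (x : ℂ)) ^ (b : ℂ) := by
  rw [Set.uIcc_of_le zero_le_one] at hx
  push_cast [Complex.ofReal_cpow hx.1, Complex.ofReal_cpow (sub_nonneg.2 hx.2)]
  rfl

lemma intervalIntegrable_rpow_mul_one_sub_rpow {a b : ℝ} (ha : -1 < a) (hb : -1 < b) :
    IntervalIntegrable (fun x : ℝ => x ^ a * (1 - x) ^ b) volume 0 1 := by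
  have h := Complex.betaIntegral_convergent (u := a + 1) (v := b + 1)
    (by simp; linarith) (by simp; linarith)
  simp only [add_sub_cancel_right] at h
  rw [intervalIntegrable_iff_integrableOn_Ioc_of_le zero_le_one] at h ⊢
  have h_re : IntegrableOn (fun x : ℝ => ((x : ℂ) ^ (a : ℂ) * (1 - (x : ℂ)) ^ (b : ℂ)).re)
      (Set.Ioc 0 1) := h.re
  refine h_re.congr_fun (fun x hx => ?_) measurableSet_Ioc
  simp only [← ofReal_rpow_mul_one_sub_rpow (Set.Ioc_subset_Icc_self (by simpa using hx)),
    Complex.ofReal_re]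

lemma integral_rpow_mul_one_sub_rpow {a b : ℝ} (ha : -1 < a) (hb : -1 < b) :
    ∫ x in (0 : ℝ)..1, x ^ a * (1 - x) ^ b = Gamma (a + 1) * Gamma (b + 1) / Gamma (a + b + 2) := by
  have h := Complex.Gamma_mul_Gamma_eq_betaIntegral (s := (a + 1 : ℝ)) (t := (b + 1 : ℝ))
    (by simp; linarith) (by simp; linarith)
  simp only [Complex.betaIntegral, Complex.ofReal_add, Complex.ofReal_one,
    add_sub_cancel_right] at h
  rw [← intervalIntegral.integral_congr (fun x hx => ofReal_rpow_mul_one_sub_rpow hx a b),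
    intervalIntegral.integral_ofReal, show (a : ℂ) + 1 + (b + 1) = ((a + b + 2 : ℝ) : ℂ) by
      push_cast; ring, ← Complex.ofReal_one, ← Complex.ofReal_add, ← Complex.ofReal_add] at h
  simp only [Complex.Gamma_ofReal, ← Complex.ofReal_mul, Complex.ofReal_inj] at h
  rw [eq_div_iff (Gamma_pos_of_pos (by linarith)).ne', mul_comm, h]

lemma integral_two_mul_sub_one_mul_rpow_mul_one_sub_rpow {a b : ℝ} (ha : -1 < a) (hb : -1 < b) :
    ∫ x in (0 : ℝ)..1, (2 * x - 1) * (x ^ a * (1 - x) ^ b) =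
      (a - b) / (a + b + 2) * (Gamma (a + 1) * Gamma (b + 1) / Gamma (a + b + 2)) := by
  have hsplit : Set.EqOn (fun x : ℝ => (2 * x - 1) * (x ^ a * (1 - x) ^ b))
      (fun x => x ^ (a + 1) * (1 - x) ^ b - x ^ a * (1 - x) ^ (b + 1)) (Set.uIcc 0 1) := by
    intro x hx
    rw [Set.uIcc_of_le zero_le_one] at hx
    dsimp only
    rw [rpow_add_one' hx.1 (by linarith), rpow_add_one' (sub_nonneg.2 hx.2) (by linarith)]
    ring
  rw [intervalIntegral.integral_congr hsplit, intervalIntegral.integral_sub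
    (intervalIntegrable_rpow_mul_one_sub_rpow (by linarith) hb)
    (intervalIntegrable_rpow_mul_one_sub_rpow ha (by linarith)),
    integral_rpow_mul_one_sub_rpow (by linarith) hb,
    integral_rpow_mul_one_sub_rpow ha (by linarith),
    show a + 1 + b + 2 = (a + b + 2) + 1 by ring, show a + (b + 1) + 2 = (a + b + 2) + 1 by ring,
    Gamma_add_one (s := a + 1) (by linarith), Gamma_add_one (s := b + 1) (by linarith),
    Gamma_add_one (s := a + b + 2) (by linarith)]
  have : Gamma (a + b + 2) ≠ 0 := (Gamma_pos_of_pos (by linarith)).ne'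
  have : a + b + 2 ≠ 0 := by linarith
  field_simp
  ring

lemma integral_half_one_add_comp_one_sub {f : ℝ → ℝ} (hf : IntervalIntegrable f volume 0 1) :
    ∫ x in (1 / 2 : ℝ)..1, (f x + f (1 - x)) = ∫ x in (0 : ℝ)..1, f x := by
  have hleft : IntervalIntegrable f volume 0 (1 / 2) :=
    hf.mono_set (Set.uIcc_subset_uIcc_left (by norm_num))
  have hright : IntervalIntegrable f volume (1 / 2) 1 :=
    hf.mono_set (Set.uIcc_subset_uIcc_right (by norm_num))
  have hreflect : IntervalIntegrable (fun x => f (1 - x)) volume (1 / 2) 1 := by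
    have h := (hleft.comp_sub_left 1).symm
    norm_num at h
    exact h
  rw [intervalIntegral.integral_add hright hreflect, intervalIntegral.integral_comp_sub_left,
    ← intervalIntegral.integral_add_adjacent_intervals hleft hright]
  norm_num
  ring

lemma Gamma_add_third_mul_Gamma_add_two_thirds (k : ℕ) :
    √3 * 27 ^ k * k ! * (Gamma (k + 1 / 3) * Gamma (k + 2 / 3)) = 2 * π * (3 * k)! := by
  induction k with
  | zero =>
    have h := Gamma_mul_Gamma_one_sub (1 / 3)
    rw [show (1 : ℝ) - 1 / 3 = 2 / 3 by norm_num, show π * (1 / 3) = π / 3 by ring,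
      sin_pi_div_three] at h
    simp only [Nat.cast_zero, zero_add, h]
    field_simp
  | succ k ih =>
    have h3k : ((3 * (k + 1))! : ℝ) = (3 * k + 3) * (3 * k + 2) * (3 * k + 1) * (3 * k)! := by
      rw [show 3 * (k + 1) = 3 * k + 1 + 1 + 1 by ring, Nat.factorial_succ, Nat.factorial_succ,
        Nat.factorial_succ]
      push_cast; ring
    rw [Nat.cast_succ, show (k : ℝ) + 1 + 1 / 3 = k + 1 / 3 + 1 by ring,
      show (k : ℝ) + 1 + 2 / 3 = k + 2 / 3 + 1 by ring, Gamma_add_one (by positivity),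
      Gamma_add_one (by positivity), h3k, Nat.factorial_succ]
    push_cast
    linear_combination (27 * ((k : ℝ) + 1) * (k + 1 / 3) * (k + 2 / 3)) * ih

lemma image_mul_mul_one_sub_Ioo {c : ℝ} (hc : 0 < c) :
    (fun u => c * u * (1 - u)) '' Set.Ioo (1 / 2) 1 = Set.Ioo 0 (c / 4) := by
  ext x
  constructor
  · rintro ⟨u, ⟨hu₁, hu₂⟩, rfl⟩
    dsimp only
    have hsq : 0 < c * (2 * u - 1) ^ 2 := mul_pos hc (pow_pos (by linarith) 2)
    constructor
    · exact mul_pos (mul_pos hc (by linarith)) (by linarith)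
    · linear_combination hsq / 4
  · rintro ⟨hx₀, hx₁⟩
    have hd : 0 < 1 - 4 * x / c := by rw [sub_pos, div_lt_one hc]; linarith
    set s := √(1 - 4 * x / c)
    have hs₀ : 0 < s := sqrt_pos.2 hd
    have hs_sq : s ^ 2 = 1 - 4 * x / c := sq_sqrt hd.le
    have hs₁ : s < 1 := by rw [sqrt_lt' one_pos]; linarith [div_pos (by linarith : 0 < 4 * x) hc]
    refine ⟨(1 + s) / 2, ⟨by linarith, by linarith⟩, ?_⟩
    show c * ((1 + s) / 2) * (1 - (1 + s) / 2) = x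
    rw [show c * ((1 + s) / 2) * (1 - (1 + s) / 2) = c / 4 * (1 - s ^ 2) by ring, hs_sq]
    field_simp
    ring

theorem integral_eq_integral_comp_mul_mul_one_sub {c : ℝ} (hc : 0 < c) (f : ℝ → ℝ) :
    ∫ x in (0 : ℝ)..c / 4, f x = ∫ u in (1 / 2 : ℝ)..1, c * (2 * u - 1) * f (c * u * (1 - u)) := by
  have hderiv : ∀ u ∈ Set.Ioo (1 / 2 : ℝ) 1,
      HasDerivWithinAt (fun u => c * u * (1 - u)) (c - 2 * c * u) (Set.Ioo (1 / 2) 1) u := by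
    intro u _
    have := ((hasDerivAt_id' u).const_mul c).mul ((hasDerivAt_id' u).const_sub 1)
    exact (this.congr_deriv (by ring)).hasDerivWithinAt
  have hinj : Set.InjOn (fun u => c * u * (1 - u)) (Set.Ioo (1 / 2) 1) := by
    intro u hu v hv huv
    have : c * ((u - v) * (1 - u - v)) = 0 := by simp only at huv; linear_combination huv
    rcases mul_eq_zero.1 ((mul_eq_zero.1 this).resolve_left hc.ne') with h | h
    · linarith
    · linarith [hu.1, hv.1]
  rw [intervalIntegral.integral_of_le (by positivity), integral_Ioc_eq_integral_Ioo,
    ← image_mul_mul_one_sub_Ioo hc,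
    integral_image_eq_integral_abs_deriv_smul measurableSet_Ioo hderiv hinj,
    intervalIntegral.integral_of_le (by norm_num), integral_Ioc_eq_integral_Ioo]
  refine setIntegral_congr_fun measurableSet_Ioo (fun u hu => ?_)
  rw [smul_eq_mul, abs_of_nonpos (by nlinarith [hu.1])]
  ring

lemma rpow_two_div_three {x : ℝ} (hx : 0 ≤ x) : x ^ ((2 : ℝ) / 3) = (x ^ ((1 : ℝ) / 3)) ^ 2 := by
  rw [← rpow_mul_natCast hx]; norm_num

lemma rpow_one_div_three_pow_three {x : ℝ} (hx : 0 ≤ x) : (x ^ ((1 : ℝ) / 3)) ^ 3 = x := by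
  rw [← rpow_mul_natCast hx]; norm_num

lemma rpow_one_div_three_of_pow_three {x y : ℝ} (hy : 0 ≤ y) (h : x = y ^ 3) :
    x ^ ((1 : ℝ) / 3) = y := by
  rw [h, ← rpow_natCast, ← rpow_mul hy]; norm_num

lemma fcDensity2_mul_mul_one_sub {u : ℝ} (hu : u ∈ Set.Ioo (1 / 2) 1) :
    fcDensity2 (27 * u * (1 - u)) = √3 / (18 * π) *
      (u ^ (-(1 / 3) : ℝ) * (1 - u) ^ (-(2 / 3) : ℝ) -
        u ^ (-(2 / 3) : ℝ) * (1 - u) ^ (-(1 / 3) : ℝ)) := by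
  obtain ⟨hu₁, hu₂⟩ := hu
  have hu₀ : 0 ≤ u := by linarith
  have hv₀ : 0 ≤ 1 - u := by linarith
  have hc3 : ((2 : ℝ) ^ ((1 : ℝ) / 3)) ^ 3 = 2 := rpow_one_div_three_pow_three zero_le_two
  have hsqrt : √(81 - 12 * (27 * u * (1 - u))) = 9 * (2 * u - 1) := by
    rw [show 81 - 12 * (27 * u * (1 - u)) = (9 * (2 * u - 1)) ^ 2 by ring]
    exact sqrt_sq (by linarith)
  have hS : (27 + 3 * (9 * (2 * u - 1))) ^ ((1 : ℝ) / 3) =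
      3 * 2 ^ ((1 : ℝ) / 3) * u ^ ((1 : ℝ) / 3) :=
    rpow_one_div_three_of_pow_three (by positivity) (by
      rw [mul_pow, mul_pow, hc3, rpow_one_div_three_pow_three hu₀]; ring)
  have hx : (27 * u * (1 - u)) ^ ((1 : ℝ) / 3) =
      3 * u ^ ((1 : ℝ) / 3) * (1 - u) ^ ((1 : ℝ) / 3) :=
    rpow_one_div_three_of_pow_three (by positivity) (by
      rw [mul_pow, mul_pow, rpow_one_div_three_pow_three hu₀, rpow_one_div_three_pow_three hv₀]
      ring)
  have hneg₁ {x : ℝ} (hx : 0 ≤ x) : x ^ (-(1 / 3) : ℝ) = (x ^ ((1 : ℝ) / 3))⁻¹ := by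
    rw [rpow_neg hx, one_div]
  have hneg₂ {x : ℝ} (hx : 0 ≤ x) : x ^ (-(2 / 3) : ℝ) = ((x ^ ((1 : ℝ) / 3)) ^ 2)⁻¹ := by
    rw [rpow_neg hx, ← rpow_two_div_three hx]
  have hx₀ : 0 ≤ 27 * u * (1 - u) := mul_nonneg (by positivity) hv₀
  rw [fcDensity2, rpow_two_div_three (by positivity), rpow_two_div_three hx₀, hsqrt, hS, hx,
    hneg₁ hu₀, hneg₂ hu₀, hneg₁ hv₀, hneg₂ hv₀]
  field_simp
  linear_combination (54 * u ^ ((1 : ℝ) / 3)) * hc3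

lemma mul_pow_mul_fcDensity2_mul_mul_one_sub (k : ℕ) {u : ℝ} (hu : u ∈ Set.Ioo (1 / 2) 1) :
    27 * (2 * u - 1) * ((27 * u * (1 - u)) ^ k * fcDensity2 (27 * u * (1 - u))) =
      3 * √3 / (2 * π) * 27 ^ k * ((2 * u - 1) *
        (u ^ ((k : ℝ) - 1 / 3) * (1 - u) ^ ((k : ℝ) - 2 / 3) -
          u ^ ((k : ℝ) - 2 / 3) * (1 - u) ^ ((k : ℝ) - 1 / 3))) := by
  have hpow : ∀ {x : ℝ}, 0 < x → ∀ s : ℝ, x ^ ((k : ℝ) - s) = x ^ k * x ^ (-s) := fun hx s => by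
    rw [sub_eq_add_neg, rpow_add hx, rpow_natCast]
  rw [fcDensity2_mul_mul_one_sub hu, mul_pow, mul_pow]
  simp only [hpow (by linarith [hu.1] : 0 < u), hpow (by linarith [hu.2] : 0 < 1 - u)]
  ring

lemma integral_two_mul_sub_one_mul_rpow_eq_choose (k : ℕ) :
    ∫ u in (0 : ℝ)..1, (2 * u - 1) * (u ^ ((k : ℝ) - 1 / 3) * (1 - u) ^ ((k : ℝ) - 2 / 3)) =
      2 * π / (3 * √3 * 27 ^ k) * ((1 / (2 * k + 1) : ℝ) * (Nat.choose (3 * k) k : ℝ)) := by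
  have hk : (0 : ℝ) ≤ k := k.cast_nonneg
  have hΓ := Gamma_add_third_mul_Gamma_add_two_thirds k
  rw [integral_two_mul_sub_one_mul_rpow_mul_one_sub_rpow (by linarith) (by linarith),
    show (k : ℝ) - 1 / 3 + 1 = k + 2 / 3 by ring, show (k : ℝ) - 2 / 3 + 1 = k + 1 / 3 by ring,
    show (k : ℝ) - 1 / 3 + (k - 2 / 3) + 2 = ((2 * k : ℕ) : ℝ) + 1 by push_cast; ring,
    Gamma_nat_eq_factorial, Nat.cast_choose ℝ (by omega : k ≤ 3 * k),
    show 3 * k - k = 2 * k by omega]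
  generalize Gamma (k + 1 / 3) = G₁ at hΓ ⊢
  generalize Gamma (k + 2 / 3) = G₂ at hΓ ⊢
  push_cast
  field_simp
  linear_combination hΓ

/-- The `k`-th moment of the Fuss–Catalan density of order 2 is the Fuss–Catalan number
`(1/(2k+1)) * choose (3k) k`. -/
theorem fcDensity2_moments (k : ℕ) :
    ∫ x in (0 : ℝ)..(27 / 4 : ℝ), x ^ k * fcDensity2 x =
      (1 / (2 * k + 1) : ℝ) * (Nat.choose (3 * k) k : ℝ) := by
  set f : ℝ → ℝ := fun u => (2 * u - 1) * (u ^ ((k : ℝ) - 1 / 3) * (1 - u) ^ ((k : ℝ) - 2 / 3))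
  have hk : (0 : ℝ) ≤ k := k.cast_nonneg
  have hf : IntervalIntegrable f volume 0 1 :=
    (intervalIntegrable_rpow_mul_one_sub_rpow (by linarith) (by linarith)).continuousOn_mul
      (by fun_prop)
  calc ∫ x in (0 : ℝ)..(27 / 4 : ℝ), x ^ k * fcDensity2 x
      = ∫ u in (1 / 2 : ℝ)..1,
          27 * (2 * u - 1) * ((27 * u * (1 - u)) ^ k * fcDensity2 (27 * u * (1 - u))) :=
        integral_eq_integral_comp_mul_mul_one_sub (by norm_num) _
    _ = ∫ u in (1 / 2 : ℝ)..1, 3 * √3 / (2 * π) * 27 ^ k * (f u + f (1 - u)) := by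
        refine intervalIntegral.integral_congr_Ioo_of_le (by norm_num) (fun u hu => ?_)
        rw [mul_pow_mul_fcDensity2_mul_mul_one_sub k hu]
        simp only [f, sub_sub_cancel]
        ring
    _ = 3 * √3 / (2 * π) * 27 ^ k * ∫ u in (0 : ℝ)..1, f u := by
        rw [intervalIntegral.integral_const_mul, integral_half_one_add_comp_one_sub hf]
    _ = (1 / (2 * k + 1) : ℝ) * (Nat.choose (3 * k) k : ℝ) := by
        rw [integral_two_mul_sub_one_mul_rpow_eq_choose]
        field_simp
end

section
/- For integers m ≥ 1 define the Fuss–Catalan numbers M_k = (1/(mk+1)) · binom(mk + k, k) for k ≥ 0. Then M₀ = 1 and for every k ≥ 1, M_k = Σ_{k₀ + k₁ + ⋯ + k_m = k − 1} ∏_{ν=0}^{m} M_{k_ν}, where the sum runs over all (m+1)-tuples of nonnegative integers summing to k − 1. -/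
/-!
Let `B r = ∑ₙ R(r, n) Xⁿ` be the generating series of the Raney numbers
`R(r, n) = r / (pn + r) · C(pn + r, n)`. The Pascal-type rule
`R(r + 1, n + 1) = R(r, n + 1) + R(r + p, n)` says `B (r + 1) = B r + X · B (r + p)`.
The defect `B 1 · B r - B (r + 1)` obeys the same recurrence and vanishes at `r = 0`, so it
vanishes identically: `B r = (B 1) ^ r`. At `r = 0` the recurrence then reads
`B 1 = 1 + X · (B 1) ^ p`. For `p = m + 1`, `B 1` is the generating series of the Fuss–Catalan
numbers, and comparing coefficients of this functional equation is the recurrence.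
-/

open Finset

/-- The Fuss–Catalan numbers of order `m`: `M k = (1/(mk+1)) * choose (mk+k) k`. -/
noncomputable def fussCatalan (m k : ℕ) : ℚ :=
  (1 / (m * k + 1) : ℚ) * (Nat.choose (m * k + k) k : ℚ)

theorem Finset.Nat.sum_antidiagonalTuple_succ {M : Type*} [AddCommMonoid M] (k n : ℕ)
    (f : (Fin (k + 1) → ℕ) → M) :
    ∑ x ∈ Nat.antidiagonalTuple (k + 1) n, f x =
      ∑ p ∈ antidiagonal n, ∑ x ∈ Nat.antidiagonalTuple k p.2, f (Fin.cons p.1 x) := by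
  rw [sum_sigma']
  refine sum_nbij' (fun x ↦ ⟨(x 0, ∑ i, Fin.tail x i), Fin.tail x⟩) (fun q ↦ Fin.cons q.1.1 q.2)
    ?_ ?_ (fun x _ ↦ Fin.cons_self_tail x) ?_ (fun x _ ↦ by simp)
  · intro x hx
    simp_all [Nat.mem_antidiagonalTuple, Fin.sum_univ_succ, Fin.tail]
  · rintro ⟨⟨a, b⟩, x⟩ hq
    simp_all [Nat.mem_antidiagonalTuple, Fin.sum_cons]
  · rintro ⟨⟨a, b⟩, x⟩ hq
    simp_all [Nat.mem_antidiagonalTuple]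

namespace PowerSeries

variable {R : Type*}

theorem coeff_pow_eq_sum_antidiagonalTuple [CommSemiring R] (φ : R⟦X⟧) (s n : ℕ) :
    coeff n (φ ^ s) = ∑ x ∈ Finset.Nat.antidiagonalTuple s n, ∏ ν, coeff (x ν) φ := by
  induction s generalizing n with
  | zero => cases n <;> simp [coeff_one]
  | succ s ih =>
    simp only [pow_succ', coeff_mul, ih, mul_sum, Finset.Nat.sum_antidiagonalTuple_succ,
      Fin.prod_univ_succ, Fin.cons_zero, Fin.cons_succ]

theorem eq_zero_of_succ_eq_add_X_mul [Semiring R] {D : ℕ → R⟦X⟧} (p : ℕ) (h₀ : D 0 = 0)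
    (hD : ∀ r, D (r + 1) = D r + X * D (r + p)) (r : ℕ) : D r = 0 := by
  ext n
  induction n generalizing r with
  | zero =>
    induction r with
    | zero => simp [h₀]
    | succ r ih => simpa [hD] using ih
  | succ n ihn =>
    induction r with
    | zero => simp [h₀]
    | succ r ih => simp [hD, ih, coeff_succ_X_mul, ihn]

end PowerSeries

/-- The closed formula would give `R(0, 0) = 0 / 0 = 0`; the Raney number is `R(0, n) = δₙ₀`. -/
noncomputable def raney (p r n : ℕ) : ℚ :=
  if r = 0 then if n = 0 then 1 else 0
  else r / (p * n + r) * (p * n + r).choose n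

section Raney

variable (p : ℕ)

@[simp]
theorem raney_zero_right (r : ℕ) : raney p r 0 = 1 := by
  by_cases hr : r = 0 <;> simp [raney, hr]

theorem raney_eq (r n : ℕ) (h : r ≠ 0 ∨ n ≠ 0) :
    raney p r n = r / (p * n + r) * (p * n + r).choose n := by
  rcases eq_or_ne r 0 with rfl | hr
  · simp [raney, h.resolve_left (not_not.mpr rfl)]
  · simp [raney, hr]

theorem raney_succ_succ (hp : 0 < p) (r n : ℕ) :
    raney p (r + 1) (n + 1) = raney p r (n + 1) + raney p (r + p) n := by
  rw [raney_eq p _ _ (.inl (by omega)), raney_eq p _ _ (.inr (by omega)),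
    raney_eq p _ _ (.inl (by omega))]
  have hN : p * n + (r + p) = p * (n + 1) + r := by ring
  have hn : n ≤ p * (n + 1) + r := by nlinarith
  have hchoose := Nat.choose_succ_right_eq (p * (n + 1) + r) n
  qify [hn] at hchoose
  rw [← add_assoc, Nat.choose_succ_succ', hN]
  have : (p : ℚ) * (n + 1) + r ≠ 0 := by positivity
  push_cast
  field_simp
  linear_combination (p * (n + 1) + r : ℚ) * p * hchoose

theorem fussCatalan_eq_raney (m k : ℕ) : fussCatalan m k = raney (m + 1) 1 k := by
  rw [fussCatalan, raney_eq _ _ _ (.inl one_ne_zero)]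
  have hk : k ≤ (m + 1) * k + 1 := by nlinarith
  have hchoose := Nat.choose_mul_succ_eq ((m + 1) * k) k
  qify [hk] at hchoose
  rw [show m * k + k = (m + 1) * k by ring]
  field_simp
  push_cast
  linear_combination hchoose

end Raney

section RaneySeries

open PowerSeries

noncomputable def raneySeries (p r : ℕ) : ℚ⟦X⟧ := mk (raney p r)

variable {p : ℕ}

theorem raneySeries_zero : raneySeries p 0 = 1 := by
  ext (_ | n) <;> simp [raneySeries, raney, coeff_one]

theorem raneySeries_succ (hp : 0 < p) (r : ℕ) :
    raneySeries p (r + 1) = raneySeries p r + X * raneySeries p (r + p) := by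
  ext (_ | n) <;> simp [raneySeries, coeff_succ_X_mul, raney_succ_succ p hp]

theorem raneySeries_one_mul (hp : 0 < p) (r : ℕ) :
    raneySeries p 1 * raneySeries p r = raneySeries p (r + 1) := by
  refine sub_eq_zero.mp (eq_zero_of_succ_eq_add_X_mul
    (D := fun r ↦ raneySeries p 1 * raneySeries p r - raneySeries p (r + 1)) p ?_ (fun r ↦ ?_) r)
  · simp [raneySeries_zero]
  · simp only [raneySeries_succ hp, add_right_comm r 1 p]
    ring

theorem raneySeries_one_pow (hp : 0 < p) (r : ℕ) : raneySeries p 1 ^ r = raneySeries p r := by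
  induction r with
  | zero => rw [pow_zero, raneySeries_zero]
  | succ r ih => rw [pow_succ', ih, raneySeries_one_mul hp]

theorem raneySeries_one_eq_one_add_X_mul_pow (hp : 0 < p) :
    raneySeries p 1 = 1 + X * raneySeries p 1 ^ p := by
  simpa [raneySeries_zero, raneySeries_one_pow hp] using raneySeries_succ hp 0

end RaneySeries

open PowerSeries in
theorem fussCatalan_recurrence_general (m : ℕ) :
    fussCatalan m 0 = 1 ∧
      ∀ k : ℕ, 1 ≤ k →
        fussCatalan m k =
          ∑ x ∈ Finset.Nat.antidiagonalTuple (m + 1) (k - 1),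
            ∏ ν : Fin (m + 1), fussCatalan m (x ν) := by
  have hM : fussCatalan m = raney (m + 1) 1 := funext (fussCatalan_eq_raney m)
  refine ⟨by simp [fussCatalan], fun k hk ↦ ?_⟩
  obtain ⟨j, rfl⟩ := Nat.exists_eq_add_of_le' hk
  calc fussCatalan m (j + 1) = coeff (j + 1) (raneySeries (m + 1) 1) := by
        simp [raneySeries, hM]
    _ = coeff j (raneySeries (m + 1) 1 ^ (m + 1)) := by
        conv_lhs => rw [raneySeries_one_eq_one_add_X_mul_pow m.succ_pos]
        simp [coeff_one, coeff_succ_X_mul]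
    _ = ∑ x ∈ Finset.Nat.antidiagonalTuple (m + 1) j, ∏ ν : Fin (m + 1), fussCatalan m (x ν) := by
        simp [coeff_pow_eq_sum_antidiagonalTuple, raneySeries, hM]

/-- The Fuss–Catalan numbers satisfy `M 0 = 1` and the recurrence
`M k = ∑_{k₀+⋯+k_m = k−1} ∏_{ν=0}^{m} M_{k_ν}` for `k ≥ 1`. -/
theorem fussCatalan_recurrence (m : ℕ) (hm : 1 ≤ m) :
    fussCatalan m 0 = 1 ∧
      ∀ k : ℕ, 1 ≤ k →
        fussCatalan m k =
          ∑ x ∈ Finset.Nat.antidiagonalTuple (m + 1) (k - 1),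
            ∏ ν : Fin (m + 1), fussCatalan m (x ν) :=
  fussCatalan_recurrence_general m
end

section
/- Let m ≥ 2, and for q = 1, …, m let H^{(q)} = [[Z^{(q)}, 0],[0, (Z^{(m−q+1)})ᵀ]] be 2n×2n block matrices built from n×n matrices Z^{(q)} = n^{-1/2}[Z_{jk}^{(q)}], with V_{[a,b]} = ∏_{k=a}^{b} H^{(k)} (and V_{[a,b]} = I when a > b), J = [[0, I],[I, 0]], V̂ = V_{[1,m]} J, and U(t) = e^{itV̂}. Then for all 1 ≤ j, k ≤ n and 1 ≤ x, y ≤ 2n, the partial derivative of the matrix exponential with respect to the entry Z_{jk}^{(1)} satisfies [∂U(t)/∂Z_{jk}^{(1)}]_{x,y} = (i/√n) · ([U·V_{[1,m−1]}]_{·, k+n} at row x convolved with [U]_{·, j} at row y)(t) + (i/√n) · ([U·V_{[1,m−1]}]_{·, k+n} at row y convolved with [U]_{·, j} at row x)(t), i.e. (i/√n)∫₀ᵗ ([U(s) V_{[1,m−1]}]_{x, k+n}[U(t−s)]_{y, j} + [U(s) V_{[1,m−1]}]_{y, k+n}[U(t−s)]_{x, j}) ds. -/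
open Matrix MeasureTheory

noncomputable section

/-- `H^{(q)} = [[Z^{(q)}, 0],[0, (Z^{(m−q+1)})ᵀ]]` (with `n^{-1/2}` normalization);
in zero-based indexing `m − q + 1` corresponds to `Fin.rev q`. -/
def Hgen (m n : ℕ) (Z : Fin m → Fin n → Fin n → ℝ) (q : Fin m) :
    Matrix (Fin n ⊕ Fin n) (Fin n ⊕ Fin n) ℝ :=
  Matrix.fromBlocks ((Real.sqrt n)⁻¹ • Matrix.of (Z q)) 0 0
    ((Real.sqrt n)⁻¹ • Matrix.of (Z q.rev))ᵀ

/-- `V_{[1,k]} = H^{(1)} ⋯ H^{(k)}` (the empty product for `k = 0`). -/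
def Vtake (m n : ℕ) (Z : Fin m → Fin n → Fin n → ℝ) (k : ℕ) :
    Matrix (Fin n ⊕ Fin n) (Fin n ⊕ Fin n) ℝ :=
  ((List.ofFn (Hgen m n Z)).take k).prod

/-- `J = [[0, I],[I, 0]]`. -/
def Jmat (n : ℕ) : Matrix (Fin n ⊕ Fin n) (Fin n ⊕ Fin n) ℝ :=
  Matrix.fromBlocks 0 1 1 0

/-- `V̂ = V_{[1,m]} J`. -/
def hatVm (m n : ℕ) (Z : Fin m → Fin n → Fin n → ℝ) :
    Matrix (Fin n ⊕ Fin n) (Fin n ⊕ Fin n) ℝ :=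
  Vtake m n Z m * Jmat n

/-- `U(t) = e^{itV̂}`. -/
def UexpM (m n : ℕ) (Z : Fin m → Fin n → Fin n → ℝ) (t : ℝ) :
    Matrix (Fin n ⊕ Fin n) (Fin n ⊕ Fin n) ℂ :=
  NormedSpace.exp ((Complex.I * (t : ℂ)) • (hatVm m n Z).map Complex.ofReal)

/-- Replace the entry `Z^{(q₀)}_{jk}` by the real variable `u`. -/
def repEntry (m n : ℕ) (Z : Fin m → Fin n → Fin n → ℝ) (q₀ : Fin m) (j k : Fin n) (u : ℝ) :
    Fin m → Fin n → Fin n → ℝ :=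
  fun r a b => if r = q₀ ∧ a = j ∧ b = k then u else Z r a b

/-!
Perturbing `Z^{(1)}_{jk}` changes only the first factor `H^{(1)}` (top-left block) and the last
factor `H^{(m)}` (bottom-right block, through the transpose), so `V̂` becomes a quadratic
polynomial in the perturbation whose linear coefficient is `(P + Pᵀ)/√n` with
`P = V_{[1,m-1]} E_{k+n,j}`; the symmetry `H^{(q)ᵀ} = J H^{(m-q+1)} J` is what identifies the
contribution of `H^{(1)}` with `Pᵀ`. Duhamel's formula `e^X - e^Y = ∫₀¹ e^{σX} (X - Y) e^{(1-σ)Y} dσ`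
differentiates `e^{itV̂}` along such a polynomial, giving `∫₀ᵗ U(s) (i/√n)(P + Pᵀ) U(t-s) ds`.
As `V̂`, hence `U`, is symmetric, the `Pᵀ`-term is the `(y, x)` entry of the `P`-term after
`s ↦ t - s`, and each `P`-term is a product of two entries.
-/

open NormedSpace

theorem hasDerivAt_of_sub_eq_smul {𝕜 E : Type*} [NontriviallyNormedField 𝕜]
    [NormedAddCommGroup E] [NormedSpace 𝕜 E] {f G : 𝕜 → E} {w₀ : 𝕜}
    (hG : ContinuousAt G w₀) (hf : ∀ w, f w - f w₀ = (w - w₀) • G w) :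
    HasDerivAt f (G w₀) w₀ := by
  rw [hasDerivAt_iff_tendsto_slope]
  refine (hG.mono_left nhdsWithin_le_nhds).congr' ?_
  filter_upwards [self_mem_nhdsWithin] with w hw
  rw [slope_def_module, hf, smul_smul, inv_mul_cancel₀ (sub_ne_zero.2 hw), one_smul]

theorem intervalIntegral.integral_add_apply_sub_swap {E : Type*} [NormedAddCommGroup E]
    [NormedSpace ℝ E] {f : ℝ → E} {F : ℝ → ℝ → E} {t : ℝ} (hf : IntervalIntegrable f volume 0 t)
    (hF : IntervalIntegrable (fun s => F s (t - s)) volume 0 t) :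
    ∫ s in (0:ℝ)..t, (f s + F (t - s) s) = ∫ s in (0:ℝ)..t, (f s + F s (t - s)) := by
  have hF' : IntervalIntegrable (fun s => F (t - s) s) volume 0 t := by
    simpa using (hF.comp_sub_left t).symm
  have hswap : ∫ s in (0:ℝ)..t, F (t - s) s = ∫ s in (0:ℝ)..t, F s (t - s) := by
    simpa using intervalIntegral.integral_comp_sub_left (fun s => F s (t - s)) t (a := 0) (b := t)
  rw [intervalIntegral.integral_add hf hF', intervalIntegral.integral_add hf hF, hswap]

section Duhamel

variable {𝔸 : Type*} [NormedRing 𝔸] [NormedAlgebra ℝ 𝔸] [CompleteSpace 𝔸]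

theorem continuous_exp_smul_mul_exp_smul (X Y W : 𝔸) (t : ℝ) :
    Continuous fun s : ℝ => exp (s • X) * Y * exp ((t - s) • W) := by
  let _ : NormedAlgebra ℚ 𝔸 := .restrictScalars ℚ ℝ 𝔸
  fun_prop

theorem exp_sub_exp_eq_integral (X Y : 𝔸) :
    exp X - exp Y = ∫ σ in (0:ℝ)..1, exp (σ • X) * (X - Y) * exp ((1 - σ) • Y) := by
  have hderiv : ∀ σ : ℝ, HasDerivAt (fun σ : ℝ => exp (σ • X) * exp ((1 - σ) • Y))
      (exp (σ • X) * (X - Y) * exp ((1 - σ) • Y)) σ := by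
    intro σ
    have hY := (hasDerivAt_exp_smul_const' Y (1 - σ)).scomp σ ((hasDerivAt_id σ).const_sub 1)
    refine ((hasDerivAt_exp_smul_const X σ).fun_mul hY).congr_deriv ?_
    simp only [neg_smul, one_smul, mul_sub, sub_mul, mul_neg, mul_assoc, Function.comp_apply]
    abel
  rw [intervalIntegral.integral_eq_sub_of_hasDerivAt (fun σ _ => hderiv σ)
    ((continuous_exp_smul_mul_exp_smul X (X - Y) Y 1).intervalIntegrable 0 1)]
  simp

theorem hasDerivAt_exp_add_smul_add_sq_smul (A C D : 𝔸) (w₀ : ℝ) :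
    HasDerivAt (fun w : ℝ => exp (A + (w - w₀) • C + (w - w₀) ^ 2 • D))
      (∫ σ in (0:ℝ)..1, exp (σ • A) * C * exp ((1 - σ) • A)) w₀ := by
  let _ : NormedAlgebra ℚ 𝔸 := .restrictScalars ℚ ℝ 𝔸
  set B : ℝ → 𝔸 := fun w => A + (w - w₀) • C + (w - w₀) ^ 2 • D
  set G : ℝ → 𝔸 := fun w =>
    ∫ σ in (0:ℝ)..1, exp (σ • B w) * (C + (w - w₀) • D) * exp ((1 - σ) • A)
  have hG : Continuous G :=
    intervalIntegral.continuous_parametric_intervalIntegral_of_continuous' (by fun_prop) 0 1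
  have hG₀ : G w₀ = ∫ σ in (0:ℝ)..1, exp (σ • A) * C * exp ((1 - σ) • A) := by
    simp [G, B]
  rw [← hG₀]
  refine hasDerivAt_of_sub_eq_smul hG.continuousAt fun w => ?_
  have hBA : B w - A = (w - w₀) • (C + (w - w₀) • D) := by
    simp only [B, smul_add, smul_smul, ← sq]
    abel
  simp only [sub_self, zero_smul, zero_pow two_ne_zero, add_zero]
  rw [exp_sub_exp_eq_integral, hBA, ← intervalIntegral.integral_smul]
  simp only [mul_smul_comm, smul_mul_assoc]
  rfl

theorem hasDerivAt_exp_smul_add_smul_add_sq_smul (X Y D : 𝔸) (t u₀ : ℝ) :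
    HasDerivAt (fun u : ℝ => exp (t • X + (u - u₀) • t • Y + (u - u₀) ^ 2 • D))
      (∫ s in (0:ℝ)..t, exp (s • X) * Y * exp ((t - s) • X)) u₀ := by
  convert hasDerivAt_exp_add_smul_add_sq_smul (t • X) (t • Y) D u₀ using 1
  have h := intervalIntegral.smul_integral_comp_mul_left (a := 0) (b := 1)
    (fun s => exp (s • X) * Y * exp ((t - s) • X)) t
  simp only [mul_zero, mul_one] at h
  rw [← h, ← intervalIntegral.integral_smul]
  congr 1 with σ
  rw [smul_smul, smul_smul, mul_smul_comm, smul_mul_assoc, mul_comm σ t,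
    show (1 - σ) * t = t - t * σ by ring]

end Duhamel

section MatrixExp

variable {N : Type*} [Fintype N] [DecidableEq N]

theorem continuous_exp_smul_mul_exp_smul_apply (X Y W : Matrix N N ℂ) (t : ℝ) (x y : N) :
    Continuous fun s : ℝ => (exp (s • X) * Y * exp ((t - s) • W)) x y := by
  let _ := Matrix.linftyOpNormedRing (n := N) (α := ℂ)
  let _ := Matrix.linftyOpNormedAlgebra (R := ℝ) (n := N) (α := ℂ)
  exact (entryLinearMap ℝ ℂ x y).toContinuousLinearMap.continuous.comp
    (continuous_exp_smul_mul_exp_smul X Y W t)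

theorem hasDerivAt_exp_smul_add_smul_add_sq_smul_apply (X Y D : Matrix N N ℂ) (t u₀ : ℝ)
    (x y : N) :
    HasDerivAt (fun u : ℝ => exp (t • X + (u - u₀) • t • Y + (u - u₀) ^ 2 • D) x y)
      (∫ s in (0:ℝ)..t, (exp (s • X) * Y * exp ((t - s) • X)) x y) u₀ := by
  let _ := Matrix.linftyOpNormedRing (n := N) (α := ℂ)
  let _ := Matrix.linftyOpNormedAlgebra (R := ℝ) (n := N) (α := ℂ)
  let entry : Matrix N N ℂ →L[ℝ] ℂ := (entryLinearMap ℝ ℂ x y).toContinuousLinearMap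
  have h := entry.hasFDerivAt.comp_hasDerivAt u₀
    (hasDerivAt_exp_smul_add_smul_add_sq_smul X Y D t u₀)
  rwa [← entry.intervalIntegral_comp_comm
    ((continuous_exp_smul_mul_exp_smul X Y X t).intervalIntegrable 0 t)] at h

end MatrixExp

section MatrixEntries

variable {N R : Type*} [Fintype N] [CommSemiring R]

theorem Matrix.mul_add_transpose_mul_apply {U U' : Matrix N N R} (hU : Uᵀ = U) (hU' : U'ᵀ = U')
    (P : Matrix N N R) (x y : N) :
    (U * (P + Pᵀ) * U') x y = (U * P * U') x y + (U' * P * U) y x := by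
  rw [mul_add, add_mul, add_apply, ← transpose_apply (U * Pᵀ * U'), transpose_mul, transpose_mul,
    transpose_transpose, hU, hU', ← Matrix.mul_assoc]

theorem Matrix.mul_single_one_mul_apply [DecidableEq N] (A B : Matrix N N R) (c d x y : N) :
    (A * single c d (1 : R) * B : Matrix N N R) x y = A x c * B d y := by
  rw [mul_apply, Finset.sum_eq_single d]
  · simp
  · intro b _ hb
    rw [mul_single_apply_of_ne _ _ _ _ _ hb, zero_mul]
  · simp

end MatrixEntries

theorem List.prod_ofFn_eq_first_mul_mul_last {M : Type*} [Monoid M] {r : ℕ}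
    (f : Fin (r + 2) → M) :
    (List.ofFn f).prod =
      f 0 * (List.ofFn fun i : Fin r => f i.castSucc.succ).prod * f (Fin.last (r + 1)) := by
  rw [List.ofFn_succ, List.ofFn_succ_last]
  simp [List.prod_append, mul_assoc]

theorem Matrix.transpose_prod_ofFn {ι R : Type*} [Fintype ι] [DecidableEq ι] [CommSemiring R]
    {J : Matrix ι ι R} (hJ : J * J = 1) :
    ∀ {k : ℕ} (f g : Fin k → Matrix ι ι R), (∀ i, (f i.rev)ᵀ = J * g i * J) →
      (List.ofFn f).prodᵀ = J * (List.ofFn g).prod * J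
  | 0, _, _, _ => by simp [hJ]
  | k + 1, f, g, hfg => by
    have ih := Matrix.transpose_prod_ofFn hJ (fun i => f i.succ) (fun i => g i.castSucc) fun i => by
      simpa [Fin.rev_castSucc] using hfg i.castSucc
    have hlast : (f 0)ᵀ = J * g (Fin.last k) * J := by simpa using hfg (Fin.last k)
    rw [List.ofFn_succ, List.prod_cons, transpose_mul, ih, hlast, List.ofFn_succ_last,
      List.prod_append, List.prod_singleton]
    calc J * (List.ofFn fun i => g i.castSucc).prod * J * (J * g (Fin.last k) * J)
        = J * (List.ofFn fun i => g i.castSucc).prod * (J * J) * g (Fin.last k) * J := by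
          simp only [mul_assoc]
      _ = _ := by rw [hJ, mul_one, mul_assoc J]

section Symmetry

variable {m n : ℕ} (Z : Fin m → Fin n → Fin n → ℝ)

theorem Jmat_mul_Jmat : Jmat n * Jmat n = 1 := by
  simp [Jmat, fromBlocks_multiply, ← fromBlocks_one]

theorem Jmat_transpose : (Jmat n)ᵀ = Jmat n := by
  simp [Jmat, fromBlocks_transpose]

theorem single_inr_mul_Jmat (a : Fin n ⊕ Fin n) (b : Fin n) (c : ℝ) :
    single a (Sum.inr b) c * Jmat n = single a (Sum.inl b) c := by
  ext x (y | y) <;> by_cases a = x <;> simp_all [Jmat, single_apply, mul_apply, one_apply]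

theorem Hgen_transpose (q : Fin m) : (Hgen m n Z q)ᵀ = Jmat n * Hgen m n Z q.rev * Jmat n := by
  simp [Hgen, Jmat, fromBlocks_transpose, fromBlocks_multiply]

theorem Vtake_self : Vtake m n Z m = (List.ofFn (Hgen m n Z)).prod := by
  rw [Vtake, List.take_of_length_le (by simp)]

theorem hatVm_transpose : (hatVm m n Z)ᵀ = hatVm m n Z := by
  have h := Matrix.transpose_prod_ofFn Jmat_mul_Jmat (Hgen m n Z) (Hgen m n Z) fun q => by
    rw [Hgen_transpose, Fin.rev_rev]
  rw [hatVm, transpose_mul, Jmat_transpose, Vtake_self, h, ← mul_assoc, ← mul_assoc,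
    Jmat_mul_Jmat, one_mul]

theorem UexpM_transpose (s : ℝ) : (UexpM m n Z s)ᵀ = UexpM m n Z s := by
  rw [UexpM, ← Matrix.exp_transpose, transpose_smul, ← transpose_map, hatVm_transpose]

theorem UexpM_eq_exp_smul (s : ℝ) :
    UexpM m n Z s = exp (s • (Complex.I • (hatVm m n Z).map Complex.ofReal)) := by
  rw [UexpM, ← Complex.coe_smul, smul_smul, mul_comm]

theorem UexpM_mul_map_add_transpose_mul_UexpM_apply
    (A : Matrix (Fin n ⊕ Fin n) (Fin n ⊕ Fin n) ℝ) (s s' : ℝ) (x y : Fin n ⊕ Fin n) :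
    (UexpM m n Z s * (A + Aᵀ).map Complex.ofReal * UexpM m n Z s') x y =
      (UexpM m n Z s * A.map Complex.ofReal * UexpM m n Z s') x y +
        (UexpM m n Z s' * A.map Complex.ofReal * UexpM m n Z s) y x := by
  rw [Matrix.map_add _ Complex.ofReal_add, transpose_map,
    mul_add_transpose_mul_apply (UexpM_transpose Z s) (UexpM_transpose Z s')]

end Symmetry

section Perturbation

variable {m n : ℕ} (Z : Fin m → Fin n → Fin n → ℝ) {q₀ : Fin m} (j k : Fin n) (u : ℝ)

theorem repEntry_of_ne {q : Fin m} (hq : q ≠ q₀) : repEntry m n Z q₀ j k u q = Z q := by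
  funext a b
  simp [repEntry, hq]

theorem of_repEntry_self :
    Matrix.of (repEntry m n Z q₀ j k u q₀) = Matrix.of (Z q₀) + (u - Z q₀ j k) • single j k 1 := by
  ext a b
  by_cases h : a = j ∧ b = k
  · obtain ⟨rfl, rfl⟩ := h
    simp [repEntry]
  · have h' : ¬(j = a ∧ k = b) := fun ⟨hj, hk⟩ => h ⟨hj.symm, hk.symm⟩
    simp [repEntry, h, h']

theorem Hgen_repEntry_of_ne {q : Fin m} (hq : q ≠ q₀) (hq' : q.rev ≠ q₀) :
    Hgen m n (repEntry m n Z q₀ j k u) q = Hgen m n Z q := by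
  rw [Hgen, Hgen, repEntry_of_ne Z j k u hq, repEntry_of_ne Z j k u hq']

theorem Hgen_repEntry_self (h : q₀.rev ≠ q₀) :
    Hgen m n (repEntry m n Z q₀ j k u) q₀ =
      Hgen m n Z q₀ + ((u - Z q₀ j k) / √n) • single (Sum.inl j) (Sum.inl k) 1 := by
  rw [Hgen, Hgen, of_repEntry_self, repEntry_of_ne Z j k u h]
  ext (a | a) (b | b) <;> simp [single_apply, div_eq_inv_mul]

theorem Hgen_repEntry_rev (h : q₀.rev ≠ q₀) :
    Hgen m n (repEntry m n Z q₀ j k u) q₀.rev =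
      Hgen m n Z q₀.rev + ((u - Z q₀ j k) / √n) • single (Sum.inr k) (Sum.inr j) 1 := by
  rw [Hgen, Hgen, Fin.rev_rev, of_repEntry_self, repEntry_of_ne Z j k u h]
  ext (a | a) (b | b) <;> simp [single_apply, div_eq_inv_mul]

end Perturbation

/-- The matrix `P` with `√n ∂V̂/∂Z^{(1)}_{jk} = P + Pᵀ`. -/
def hatVmDerivPart (m n : ℕ) (Z : Fin m → Fin n → Fin n → ℝ) (j k : Fin n) :
    Matrix (Fin n ⊕ Fin n) (Fin n ⊕ Fin n) ℝ :=
  Vtake m n Z (m - 1) * single (Sum.inr k) (Sum.inl j) 1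

theorem UexpM_mul_hatVmDerivPart_mul_UexpM_apply {m n : ℕ} (Z : Fin m → Fin n → Fin n → ℝ)
    (j k : Fin n) (s s' : ℝ) (x y : Fin n ⊕ Fin n) :
    (UexpM m n Z s * (hatVmDerivPart m n Z j k).map Complex.ofReal * UexpM m n Z s') x y =
      (UexpM m n Z s * (Vtake m n Z (m - 1)).map Complex.ofReal) x (Sum.inr k) *
        UexpM m n Z s' y (Sum.inl j) := by
  have hP : (hatVmDerivPart m n Z j k).map Complex.ofReal =
      (Vtake m n Z (m - 1)).map Complex.ofReal * single (Sum.inr k) (Sum.inl j) 1 := by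
    have h := Matrix.map_mul (f := Complex.ofRealHom) (L := Vtake m n Z (m - 1))
      (M := (single (Sum.inr k) (Sum.inl j) 1 : Matrix (Fin n ⊕ Fin n) (Fin n ⊕ Fin n) ℝ))
    rwa [map_single, map_one] at h
  rw [hP, ← Matrix.mul_assoc, mul_single_one_mul_apply, ← transpose_apply (UexpM m n Z s'),
    UexpM_transpose]

section FirstLayer

variable {r n : ℕ} (Z : Fin (r + 2) → Fin n → Fin n → ℝ) (j k : Fin n)

theorem Vtake_succ_eq_first_mul_middle :
    Vtake (r + 2) n Z (r + 1) =
      Hgen (r + 2) n Z 0 * (List.ofFn fun i : Fin r => Hgen (r + 2) n Z i.castSucc.succ).prod := by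
  rw [Vtake, List.ofFn_succ_last, List.take_left' (by simp), List.ofFn_succ, List.prod_cons]
  rfl

theorem transpose_Vtake_succ :
    (Vtake (r + 2) n Z (r + 1))ᵀ =
      Jmat n * ((List.ofFn fun i : Fin r => Hgen (r + 2) n Z i.castSucc.succ).prod *
        Hgen (r + 2) n Z (Fin.last (r + 1))) * Jmat n := by
  have h := Matrix.transpose_prod_ofFn Jmat_mul_Jmat (fun i : Fin (r + 1) => Hgen (r + 2) n Z i.castSucc)
    (fun i => Hgen (r + 2) n Z i.succ) fun i => by
      rw [Hgen_transpose, Fin.rev_castSucc, Fin.rev_rev]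
  rw [Vtake, List.ofFn_succ_last, List.take_left' (by simp), h, List.ofFn_succ_last,
    List.prod_append, List.prod_singleton, Fin.succ_last]

theorem hatVmDerivPart_eq_first_mul_middle :
    hatVmDerivPart (r + 2) n Z j k =
      Hgen (r + 2) n Z 0 * (List.ofFn fun i : Fin r => Hgen (r + 2) n Z i.castSucc.succ).prod *
        single (Sum.inr k) (Sum.inr j) 1 * Jmat n := by
  rw [hatVmDerivPart, show r + 2 - 1 = r + 1 from rfl, Vtake_succ_eq_first_mul_middle,
    mul_assoc _ (single _ _ _), single_inr_mul_Jmat]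

theorem transpose_hatVmDerivPart_eq_middle_mul_last :
    (hatVmDerivPart (r + 2) n Z j k)ᵀ =
      single (Sum.inl j) (Sum.inl k) 1 *
        ((List.ofFn fun i : Fin r => Hgen (r + 2) n Z i.castSucc.succ).prod *
          Hgen (r + 2) n Z (Fin.last (r + 1))) * Jmat n := by
  rw [hatVmDerivPart, show r + 2 - 1 = r + 1 from rfl, transpose_mul, transpose_single,
    transpose_Vtake_succ, ← mul_assoc, ← mul_assoc, single_inr_mul_Jmat]

theorem hatVm_repEntry_zero :
    ∃ D, ∀ u : ℝ, hatVm (r + 2) n (repEntry (r + 2) n Z 0 j k u) =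
      hatVm (r + 2) n Z +
        ((u - Z 0 j k) / √n) • (hatVmDerivPart (r + 2) n Z j k + (hatVmDerivPart (r + 2) n Z j k)ᵀ) +
        ((u - Z 0 j k) / √n) ^ 2 • D := by
  have hrev : (0 : Fin (r + 2)).rev ≠ 0 := by
    simp [Fin.ext_iff]
  have hmiddle : ∀ u, (List.ofFn fun i : Fin r =>
      Hgen (r + 2) n (repEntry (r + 2) n Z 0 j k u) i.castSucc.succ) =
        List.ofFn fun i : Fin r => Hgen (r + 2) n Z i.castSucc.succ := fun u => by
    congr 1
    funext i
    refine Hgen_repEntry_of_ne Z j k u (Fin.succ_ne_zero _) ?_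
    simp [Fin.ext_iff]
    omega
  have hlast := (Hgen_repEntry_rev Z j k · hrev)
  simp only [Fin.rev_zero] at hlast
  refine ⟨single (Sum.inl j) (Sum.inl k) 1 *
    (List.ofFn fun i : Fin r => Hgen (r + 2) n Z i.castSucc.succ).prod *
      single (Sum.inr k) (Sum.inr j) 1 * Jmat n, fun u => ?_⟩
  rw [hatVm, hatVm, Vtake_self, Vtake_self, List.prod_ofFn_eq_first_mul_mul_last,
    List.prod_ofFn_eq_first_mul_mul_last, hmiddle, Hgen_repEntry_self Z j k u hrev, hlast,
    transpose_hatVmDerivPart_eq_middle_mul_last, hatVmDerivPart_eq_first_mul_middle]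
  simp only [add_mul, mul_add, smul_mul_assoc, mul_smul_comm, smul_add, smul_smul, sq, mul_assoc]
  abel

theorem UexpM_repEntry_zero (t : ℝ) :
    ∃ D, ∀ u : ℝ, UexpM (r + 2) n (repEntry (r + 2) n Z 0 j k u) t =
      exp (t • (Complex.I • (hatVm (r + 2) n Z).map Complex.ofReal) +
        (u - Z 0 j k) • t • ((Complex.I / √n) • (hatVmDerivPart (r + 2) n Z j k +
          (hatVmDerivPart (r + 2) n Z j k)ᵀ).map Complex.ofReal) + (u - Z 0 j k) ^ 2 • D) := by
  obtain ⟨D, hD⟩ := hatVm_repEntry_zero Z j k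
  refine ⟨(Complex.I * t / (√n : ℂ) ^ 2) • D.map Complex.ofReal, fun u => ?_⟩
  rw [UexpM, hD]
  congr 1
  ext a b
  simp only [map_apply, Matrix.add_apply, Matrix.smul_apply, smul_eq_mul, Complex.real_smul]
  push_cast
  ring

end FirstLayer

/-- Derivative of the unitary group `U(t) = e^{itV̂}` with respect to the matrix entry
`Z^{(1)}_{jk}`:
`[∂U(t)/∂Z^{(1)}_{jk}]_{x,y} = (i/√n) ∫₀ᵗ ([U(s)V_{[1,m−1]}]_{x,k+n}[U(t−s)]_{y,j}
  + [U(s)V_{[1,m−1]}]_{y,k+n}[U(t−s)]_{x,j}) ds`. -/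
theorem deriv_Uexp_entry_first_layer
    (m n : ℕ) (hm : 2 ≤ m)
    (Z : Fin m → Fin n → Fin n → ℝ) (j k : Fin n) (x y : Fin n ⊕ Fin n) (t : ℝ) :
    deriv (fun u : ℝ =>
        UexpM m n (repEntry m n Z ⟨0, by omega⟩ j k u) t x y) (Z ⟨0, by omega⟩ j k) =
      (Complex.I / (Real.sqrt n : ℂ)) *
        ∫ s in (0:ℝ)..t,
          ((UexpM m n Z s * (Vtake m n Z (m - 1)).map Complex.ofReal) x (Sum.inr k) *
              UexpM m n Z (t - s) y (Sum.inl j) +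
            (UexpM m n Z s * (Vtake m n Z (m - 1)).map Complex.ofReal) y (Sum.inr k) *
              UexpM m n Z (t - s) x (Sum.inl j)) := by
  obtain ⟨r, rfl⟩ : ∃ r, m = r + 2 := ⟨m - 2, by omega⟩
  obtain ⟨D, hD⟩ := UexpM_repEntry_zero Z j k t
  have hcont : ∀ a b, Continuous fun s => (UexpM (r + 2) n Z s *
      (hatVmDerivPart (r + 2) n Z j k).map Complex.ofReal * UexpM (r + 2) n Z (t - s)) a b :=
    fun a b => by
      simpa only [UexpM_eq_exp_smul] using continuous_exp_smul_mul_exp_smul_apply _ _ _ t a b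
  simp only [show (⟨0, by omega⟩ : Fin (r + 2)) = 0 from rfl, hD,
    (hasDerivAt_exp_smul_add_smul_add_sq_smul_apply _ _ D t _ x y).deriv, ← UexpM_eq_exp_smul,
    Matrix.mul_smul, Matrix.smul_mul, Matrix.smul_apply, smul_eq_mul,
    UexpM_mul_map_add_transpose_mul_UexpM_apply]
  rw [intervalIntegral.integral_const_mul, intervalIntegral.integral_add_apply_sub_swap
    (F := fun a b => (UexpM (r + 2) n Z a * (hatVmDerivPart (r + 2) n Z j k).map Complex.ofReal *
      UexpM (r + 2) n Z b) y x)
    ((hcont x y).intervalIntegrable 0 t) ((hcont y x).intervalIntegrable 0 t)]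
  simp only [UexpM_mul_hatVmDerivPart_mul_UexpM_apply]
end
end
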